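/- Let K ⊆ ℝ² be a compact set whose boundary ∂K is rectifiable with finite one-dimensional Hausdorff measure. For a direction θ and reals x ≤ y, |R_θχ_K(y) - R_θχ_K(x)| ≤ μ_θ([x,y]), where μ is the 1-dimensional Hausdorff measure restricted to ∂K and μ_θ is its pushforward under the projection a ↦ ⟨a, θ⟩. -/

import Mathlib

open MeasureTheory

lemma aux_frontier {α : Type*} [TopologicalSpace α] {s t : Set α} (hs : IsPreconnected s)
    (h1 : (s ∩ t).Nonempty) (h2 : (s \ t).Nonempty) : (s ∩ frontier t).Nonempty := by
  by_contra h
  rw [Set.not_nonempty_iff_eq_empty] at h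
  have hf : ∀ a ∈ s, a ∉ (frontier t) := fun a ha hfa =>
    Set.eq_empty_iff_forall_notMem.1 h a ⟨ha, hfa⟩
  have key : ∀ a ∈ s, a ∈ closure t → a ∈ interior t := by
    intro a ha hc
    have := hf a ha
    simp only [frontier, Set.mem_diff, not_and, not_not] at this
    exact this hc
  have := hs (interior t) (closure t)ᶜ isOpen_interior isClosed_closure.isOpen_compl
    (fun a ha => by
      by_cases hc : a ∈ closure t
      · exact Or.inl (key a ha hc)
      · exact Or.inr hc)
    (h1.imp fun a ha => ⟨ha.1, key a ha.1 (subset_closure ha.2)⟩)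
    (h2.imp fun a ha => ⟨ha.1, fun hc => ha.2 (interior_subset (key a ha.1 hc))⟩)
  rcases this with ⟨a, _, hai, hac⟩
  exact hac (subset_closure (interior_subset hai))

/-- The Radon transform of the characteristic function of `K` in direction `θ`. -/
noncomputable def radonTransform (d : ℕ) (K : Set (EuclideanSpace ℝ (Fin d)))
    (θ : EuclideanSpace ℝ (Fin d)) (r : ℝ) : ℝ :=
  (μH[(d : ℝ) - 1] (K ∩ {x : EuclideanSpace ℝ (Fin d) | inner ℝ x θ = r})).toReal

theorem stmt_14 (K : Set (EuclideanSpace ℝ (Fin 2))) (hK : IsCompact K)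
    (hrect : ∃ (γ : ℕ → ℝ → EuclideanSpace ℝ (Fin 2)) (C : ℕ → NNReal),
      (∀ n, LipschitzWith (C n) (γ n)) ∧
      μH[1] (frontier K \ ⋃ n, Set.range (γ n)) = 0)
    (hfin : μH[1] (frontier K) < ⊤)
    (θ : EuclideanSpace ℝ (Fin 2)) (hθ : θ ∈ Metric.sphere (0 : EuclideanSpace ℝ (Fin 2)) 1)
    (x y : ℝ) (hxy : x ≤ y) :
    |radonTransform 2 K θ y - radonTransform 2 K θ x| ≤
      ((Measure.map (fun a : EuclideanSpace ℝ (Fin 2) => (inner ℝ a θ : ℝ))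
        ((μH[1]).restrict (frontier K))) (Set.Icc x y)).toReal := by
  simp only [radonTransform]
  set θ' : EuclideanSpace ℝ (Fin 2) := (EuclideanSpace.equiv (Fin 2) ℝ).symm ![-θ 1, θ 0]
    with hθ'def
  have hθ'0 : θ' 0 = -θ 1 := rfl
  have hθ'1 : θ' 1 = θ 0 := rfl
  have hnorm : ‖θ‖ = 1 := by simpa using hθ
  have hsum : θ 0 * θ 0 + θ 1 * θ 1 = 1 := by
    have h2 : (inner ℝ θ θ : ℝ) = 1 := by
      rw [real_inner_self_eq_norm_mul_norm, hnorm]; norm_num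
    rw [PiLp.inner_apply, Fin.sum_univ_two] at h2
    simpa [RCLike.inner_apply, ← pow_two] using h2
  -- the parametrization of lines
  set φ : ℝ → ℝ → EuclideanSpace ℝ (Fin 2) := fun r t => r • θ + t • θ' with hφdef
  have hφapp : ∀ r t i, φ r t i = r * θ i + t * θ' i := by
    intro r t i
    simp [hφdef, PiLp.add_apply, PiLp.smul_apply, smul_eq_mul]
  have hnorm' : ‖θ'‖ = 1 := by
    have h2 : (inner ℝ θ' θ' : ℝ) = 1 := by
      rw [PiLp.inner_apply, Fin.sum_univ_two]
      simp [RCLike.inner_apply, hθ'0, hθ'1]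
      nlinarith [hsum]
    rw [real_inner_self_eq_norm_mul_norm] at h2
    nlinarith [norm_nonneg θ']
  have hiθ : ∀ r t, (inner ℝ (φ r t) θ : ℝ) = r := by
    intro r t
    simp [PiLp.inner_apply, Fin.sum_univ_two, RCLike.inner_apply, hφapp, hθ'0, hθ'1]
    linear_combination r * hsum
  have hiθ' : ∀ r t, (inner ℝ (φ r t) θ' : ℝ) = t := by
    intro r t
    simp [PiLp.inner_apply, Fin.sum_univ_two, RCLike.inner_apply, hφapp, hθ'0, hθ'1]
    linear_combination t * hsum
  have hdecomp : ∀ a : EuclideanSpace ℝ (Fin 2), φ (inner ℝ a θ) (inner ℝ a θ') = a := by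
    intro a
    ext i
    fin_cases i
    · simp [hφapp, PiLp.inner_apply, Fin.sum_univ_two, RCLike.inner_apply, hθ'0, hθ'1]
      linear_combination (a 0) * hsum
    · simp [hφapp, PiLp.inner_apply, Fin.sum_univ_two, RCLike.inner_apply, hθ'0, hθ'1]
      linear_combination (a 1) * hsum
  have hφcont : ∀ t, Continuous fun r => φ r t := by
    intro t; exact (continuous_id.smul continuous_const).add continuous_const
  have hφcont2 : ∀ r, Continuous (φ r) := by
    intro r; exact continuous_const.add (continuous_id.smul continuous_const)
  have hisom : ∀ r, Isometry (φ r) := by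
    intro r
    apply Isometry.of_dist_eq
    intro s t
    rw [dist_eq_norm, dist_eq_norm]
    have : φ r s - φ r t = (s - t) • θ' := by
      simp [hφdef]; module
    rw [this, norm_smul, hnorm']
    simp [Real.norm_eq_abs]
  -- the slices as subsets of ℝ
  set A : ℝ → Set ℝ := fun r => {t : ℝ | φ r t ∈ K} with hAdef
  have himg : ∀ r, K ∩ {a : EuclideanSpace ℝ (Fin 2) | inner ℝ a θ = r} = φ r '' (A r) := by
    intro r
    ext a
    constructor
    · rintro ⟨haK, har⟩
      refine ⟨inner ℝ a θ', ?_, ?_⟩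
      · simp only [hAdef, Set.mem_setOf_eq]
        rw [show r = (inner ℝ a θ : ℝ) from har.symm, hdecomp]; exact haK
      · rw [show r = (inner ℝ a θ : ℝ) from har.symm, hdecomp]
    · rintro ⟨t, ht, rfl⟩
      exact ⟨ht, hiθ r t⟩
  have hslice : ∀ r, μH[((2:ℕ):ℝ) - 1] (K ∩ {a : EuclideanSpace ℝ (Fin 2) | inner ℝ a θ = r}) =
      volume (A r) := by
    intro r
    rw [himg r]
    rw [show ((2:ℕ):ℝ) - 1 = 1 by norm_num]
    rw [(hisom r).hausdorffMeasure_image (Or.inl zero_le_one)]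
    rw [MeasureTheory.hausdorffMeasure_real]
  -- boundedness and finiteness of the slices
  obtain ⟨R, hR⟩ := hK.isBounded.subset_closedBall 0
  have hAsub : ∀ r, A r ⊆ Set.Icc (-R) R := by
    intro r t ht
    have h1 : ‖φ r t‖ ≤ R := by simpa using hR ht
    have h2 : |t| ≤ ‖φ r t‖ := by
      calc |t| = |(inner ℝ (φ r t) θ' : ℝ)| := by rw [hiθ']
        _ ≤ ‖φ r t‖ * ‖θ'‖ := abs_real_inner_le_norm _ _
        _ = ‖φ r t‖ := by rw [hnorm']; ring
    have := h2.trans h1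
    exact abs_le.1 this
  have hAfin : ∀ r, volume (A r) < ⊤ :=
    fun r => lt_of_le_of_lt (measure_mono (hAsub r)) (by simp)
  -- projections
  set π : EuclideanSpace ℝ (Fin 2) → ℝ := fun a => inner ℝ a θ' with hπdef
  have hπlip : LipschitzWith 1 π := by
    apply LipschitzWith.of_dist_le_mul
    intro a b
    rw [Real.dist_eq, dist_eq_norm]
    have : π a - π b = inner ℝ (a - b) θ' := by simp [hπdef, inner_sub_left]
    rw [this]
    calc |(inner ℝ (a - b) θ' : ℝ)| ≤ ‖a - b‖ * ‖θ'‖ := abs_real_inner_le_norm _ _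
      _ = (1 : NNReal) * ‖a - b‖ := by rw [hnorm']; norm_num
  have hcontθ : Continuous fun a : EuclideanSpace ℝ (Fin 2) => (inner ℝ a θ : ℝ) :=
    Continuous.inner continuous_id continuous_const
  set S : Set (EuclideanSpace ℝ (Fin 2)) :=
    ((fun a : EuclideanSpace ℝ (Fin 2) => (inner ℝ a θ : ℝ)) ⁻¹' Set.Icc x y) ∩ frontier K
    with hSdef
  have hABsub : ∀ r₁ r₂, r₁ ∈ Set.Icc x y → r₂ ∈ Set.Icc x y → A r₂ \ A r₁ ⊆ π '' S := by
    intro r₁ r₂ h₁ h₂ t ht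
    have hconn : IsPreconnected ((fun r => φ r t) '' Set.Icc x y) :=
      (isPreconnected_Icc).image _ ((hφcont t).continuousOn)
    have hne1 : (((fun r => φ r t) '' Set.Icc x y) ∩ K).Nonempty :=
      ⟨φ r₂ t, ⟨r₂, h₂, rfl⟩, ht.1⟩
    have hne2 : (((fun r => φ r t) '' Set.Icc x y) \ K).Nonempty :=
      ⟨φ r₁ t, ⟨r₁, h₁, rfl⟩, ht.2⟩
    obtain ⟨a, ⟨r, hr, rfl⟩, hfr⟩ := aux_frontier hconn hne1 hne2
    exact ⟨φ r t, ⟨Set.mem_preimage.2 (by rw [hiθ]; exact hr), hfr⟩, hiθ' r t⟩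
  have hπS : volume (π '' S) ≤ μH[1] S := by
    have h := hπlip.hausdorffMeasure_image_le zero_le_one S
    rw [← MeasureTheory.hausdorffMeasure_real]
    simpa using h
  have key : ∀ r₁ r₂, r₁ ∈ Set.Icc x y → r₂ ∈ Set.Icc x y →
      volume (A r₂) ≤ volume (A r₁) + μH[1] S := by
    intro r₁ r₂ h₁ h₂
    calc volume (A r₂) ≤ volume (A r₁ ∪ (A r₂ \ A r₁)) := by
          apply measure_mono
          intro t ht
          by_cases h : t ∈ A r₁
          · exact Or.inl h
          · exact Or.inr ⟨ht, h⟩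
      _ ≤ volume (A r₁) + volume (A r₂ \ A r₁) := measure_union_le _ _
      _ ≤ volume (A r₁) + μH[1] S :=
          add_le_add le_rfl ((measure_mono (hABsub r₁ r₂ h₁ h₂)).trans hπS)
  have hSfin : μH[1] S ≠ ⊤ := ((measure_mono Set.inter_subset_right).trans_lt hfin).ne
  have hmap : (Measure.map (fun a : EuclideanSpace ℝ (Fin 2) => (inner ℝ a θ : ℝ))
      ((μH[1]).restrict (frontier K))) (Set.Icc x y) = μH[1] S := by
    rw [Measure.map_apply hcontθ.measurable measurableSet_Icc,
      Measure.restrict_apply (hcontθ.measurable measurableSet_Icc)]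
  rw [hmap, hslice x, hslice y]
  have hx' : x ∈ Set.Icc x y := ⟨le_refl x, hxy⟩
  have hy' : y ∈ Set.Icc x y := ⟨hxy, le_refl y⟩
  have h1 := key x y hx' hy'
  have h2 := key y x hy' hx'
  have e1 : (volume (A y)).toReal ≤ (volume (A x)).toReal + (μH[1] S).toReal := by
    have h := ENNReal.toReal_mono (ENNReal.add_ne_top.2 ⟨(hAfin x).ne, hSfin⟩) h1
    rwa [ENNReal.toReal_add (hAfin x).ne hSfin] at h
  have e2 : (volume (A x)).toReal ≤ (volume (A y)).toReal + (μH[1] S).toReal := by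
    have h := ENNReal.toReal_mono (ENNReal.add_ne_top.2 ⟨(hAfin y).ne, hSfin⟩) h2
    rwa [ENNReal.toReal_add (hAfin y).ne hSfin] at h
  rw [abs_sub_le_iff]
  constructor <;> linarith
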